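/- Let A ⊆ ω, let c ∉ A, let S, T ⊆ ω be computable, and define f_S, f_T as in the duplication construction (f_S(2x) = x, f_S(2x+1) = x if x ∈ S, f_S(2x+1) = c if x ∉ S; similarly for f_T) with B_S = f_S⁻¹(A), B_T = f_T⁻¹(A). If h : ω → ω is a total computable injective function witnessing B_S ≤_1 B_T, then the function k_1 defined by k_1(x) := f_T(h(2x+1)) if x ∈ S and k_1(x) := x if x ∉ S is a total computable m-autoreduction of A. -/

import Mathlib

/-!
For `x ∈ S` the duplication function sends `2x+1` to `x`, so `2x+1 ∈ B_S ↔ x ∈ A`; since `h`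
reduces `B_S` to `B_T`, this is equivalent to `f_T (h (2x+1)) ∈ A`.
-/

open Classical in
/-- The duplication function: `f_S (2x) = x`, `f_S (2x+1) = x` if `x ∈ S`,
and `f_S (2x+1) = c` if `x ∉ S`. -/
noncomputable def dupFun (S : Set ℕ) (c : ℕ) (z : ℕ) : ℕ :=
  if z % 2 = 0 then z / 2
  else if z / 2 ∈ S then z / 2 else c

theorem ComputablePred.comp {α β : Type*} [Primcodable α] [Primcodable β] {p : β → Prop}
    {f : α → β} (hp : ComputablePred p) (hf : Computable f) : ComputablePred fun a => p (f a) :=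
  ComputablePred.computable_of_manyOneReducible ⟨f, hf, fun _ => Iff.rfl⟩ hp

section DupFun

variable {S : Set ℕ} {c : ℕ}

open Classical in
theorem computable_dupFun (hS : ComputablePred (· ∈ S)) : Computable (dupFun S c) := by
  have hhalf : Computable (· / 2 : ℕ → ℕ) :=
    (Primrec.nat_div.comp .id (.const 2)).to_comp
  have heven : ComputablePred (fun z : ℕ => z % 2 = 0) :=
    (Primrec.eq.comp (Primrec.nat_mod.comp .id (.const 2)) (.const 0)).computablePred
  exact ComputablePred.ite hhalf (ComputablePred.ite hhalf (.const c) (hS.comp hhalf)) heven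

theorem dupFun_two_mul_add_one {x : ℕ} (hx : x ∈ S) : dupFun S c (2 * x + 1) = x := by
  have hodd : (2 * x + 1) % 2 ≠ 0 := by omega
  have hhalf : (2 * x + 1) / 2 = x := by omega
  simp only [dupFun, hodd, hhalf, hx, if_false, if_true]

end DupFun

open Classical in
theorem stmt_9_general (A S T : Set ℕ) (c : ℕ)
    (hS : ComputablePred (· ∈ S)) (hT : ComputablePred (· ∈ T))
    (h : ℕ → ℕ) (hcomp : Computable h)
    (hred : ∀ z, z ∈ dupFun S c ⁻¹' A ↔ h z ∈ dupFun T c ⁻¹' A) :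
    Computable (fun x => if x ∈ S then dupFun T c (h (2 * x + 1)) else x) ∧
    (∀ x, x ∈ A ↔ (if x ∈ S then dupFun T c (h (2 * x + 1)) else x) ∈ A) := by
  have hodd : Computable (fun x : ℕ => 2 * x + 1) :=
    (Primrec.succ.comp (Primrec.nat_mul.comp (.const 2) .id)).to_comp
  refine ⟨ComputablePred.ite ((computable_dupFun hT).comp (hcomp.comp hodd)) .id hS, fun x => ?_⟩
  by_cases hx : x ∈ S
  · simpa only [if_pos hx, Set.mem_preimage, dupFun_two_mul_add_one hx] using hred (2 * x + 1)
  · rw [if_neg hx]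

open Classical in
/-- If `h` is a total computable injective reduction witnessing
`B_S ≤₁ B_T` (where `B_S = f_S⁻¹(A)`, `B_T = f_T⁻¹(A)`), then the function
`k₁` with `k₁ x = f_T (h (2x+1))` for `x ∈ S` and `k₁ x = x` for `x ∉ S`
is a total computable m-autoreduction of `A`. -/
theorem stmt_9 (A S T : Set ℕ) (c : ℕ) (hc : c ∉ A)
    (hS : ComputablePred (· ∈ S)) (hT : ComputablePred (· ∈ T))
    (h : ℕ → ℕ) (hcomp : Computable h) (hinj : Function.Injective h)
    (hred : ∀ z, z ∈ dupFun S c ⁻¹' A ↔ h z ∈ dupFun T c ⁻¹' A) :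
    Computable (fun x => if x ∈ S then dupFun T c (h (2 * x + 1)) else x) ∧
    (∀ x, x ∈ A ↔ (if x ∈ S then dupFun T c (h (2 * x + 1)) else x) ∈ A) :=
  stmt_9_general A S T c hS hT h hcomp hred
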